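/- (Monomial reduction) Let a ≥ 1, let X = {x_1,...,x_a}, and let m ≥ a. Then for each 1 ≤ i ≤ a: x_i^m = Σ_{j=1}^{a} (-1)^{a-j} · s(m−a, a−j)(X) · x_i^{j-1}, where s(i,j)(X) := Σ_{k+l=j}(-1)^k h_{i+k+1}(X) e_l(X) is the hook Schur polynomial s_{(i+1,1^j)}(X). -/

import Mathlib

open Finset

variable {R : Type*} [CommRing R]

/-- The elementary symmetric polynomial `e k` of a finite family of ring elements. -/
def esym {ι : Type*} [Fintype ι] [DecidableEq ι] (x : ι → R) (k : ℕ) : R :=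
  ∑ s ∈ Finset.univ.powersetCard k, ∏ i ∈ s, x i

/-- The complete homogeneous symmetric polynomial `h k` of a finite family of ring
elements (sum of all monomials of degree `k`). -/
def hsym {ι : Type*} [Fintype ι] [DecidableEq ι] (x : ι → R) (k : ℕ) : R :=
  ∑ μ : Sym ι k, (μ.1.map x).prod

/-- The hook Schur polynomial `s(i,j) = s_{(i+1,1^j)}` of a finite family. -/
def hookS {ι : Type*} [Fintype ι] [DecidableEq ι] (x : ι → R) (i j : ℕ) : R :=
  ∑ p ∈ Finset.HasAntidiagonal.antidiagonal j, (-1 : R) ^ p.1 * hsym x (i + p.1 + 1) * esym x p.2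

/-- The complete symmetric function `h j` of the difference alphabet `X - X'`. -/
def hdiff {ι κ : Type*} [Fintype ι] [DecidableEq ι] [Fintype κ] [DecidableEq κ]
    (x : ι → R) (x' : κ → R) (j : ℕ) : R :=
  ∑ p ∈ Finset.HasAntidiagonal.antidiagonal j, (-1 : R) ^ p.2 * hsym x p.1 * esym x' p.2

/-- The elementary symmetric function `e j` of the difference alphabet `X - X'`. -/
def ediff {ι κ : Type*} [Fintype ι] [DecidableEq ι] [Fintype κ] [DecidableEq κ]
    (x : ι → R) (x' : κ → R) (j : ℕ) : R :=
  ∑ p ∈ Finset.HasAntidiagonal.antidiagonal j, (-1 : R) ^ p.2 * esym x p.1 * hsym x' p.2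

/-- The power sum `p k` of a finite family of ring elements. -/
def psum' {ι : Type*} [Fintype ι] (x : ι → R) (k : ℕ) : R :=
  ∑ i, x i ^ k

/-- The elementary symmetric polynomial of a multiset of ring elements. -/
def esymM (s : Multiset R) (k : ℕ) : R :=
  ((s.powersetCard k).map Multiset.prod).sum

/-! The generating series `H(t) = ∑ hₖ tᵏ` and `E(t) = ∑ eₖ tᵏ` satisfy `H(-t) E(t) = 1`: adjoining
a variable `y` multiplies `E(t)` by `1 + y t` and `H(t)` by `(1 - y t)⁻¹`. Comparing coefficients
gives `s(0,q) = e_{q+1}`, and together with the recursion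
`s(n,q+1) + s(n+1,q) = h_{n+1} e_{q+1}` also `s(n,q) = 0` for `q ≥ a`.

Each `xᵢ` is a root of `∏ⱼ (t - xⱼ)`, so `xᵢ^a = ∑_q (-1)^q e_{q+1} xᵢ^{a-1-q}`, which is the case
`m = a`. Multiplying the reduction of `xᵢ^m` by `xᵢ`, the top term is reduced by this relation and
the recursion turns the coefficients `s(m-a,·)` into `s(m-a+1,·)`. -/

open PowerSeries

theorem Multiset.esymm_cons_succ {S : Type*} [CommSemiring S] (r : S) (s : Multiset S) (n : ℕ) :
    (r ::ₘ s).esymm (n + 1) = s.esymm (n + 1) + r * s.esymm n := by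
  simp [Multiset.esymm, Multiset.powersetCard_cons, Multiset.map_map, Multiset.sum_map_mul_left]

section

variable {ι : Type*} [Fintype ι] [DecidableEq ι]

theorem esym_eq_esymm (x : ι → R) (k : ℕ) : esym x k = (univ.val.map x).esymm k := by
  rw [Finset.esymm_map_val]; rfl

@[simp]
theorem esym_zero (x : ι → R) : esym x 0 = 1 := by simp [esym]

@[simp]
theorem hsym_zero (x : ι → R) : hsym x 0 = 1 := by simp [hsym, Sym.eq_nil_of_card_zero]

theorem esym_eq_zero_of_card_lt (x : ι → R) {k : ℕ} (h : Fintype.card ι < k) : esym x k = 0 := by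
  rw [esym, powersetCard_eq_empty.mpr (by simpa using h), sum_empty]

theorem hsym_succ_of_isEmpty [IsEmpty ι] (x : ι → R) (k : ℕ) : hsym x (k + 1) = 0 := by
  simp [hsym]

theorem esym_comp_equiv {κ : Type*} [Fintype κ] [DecidableEq κ] (e : κ ≃ ι) (x : ι → R)
    (k : ℕ) : esym (x ∘ e) k = esym x k := by
  rw [esym_eq_esymm, esym_eq_esymm, ← Multiset.map_map, Multiset.map_univ_val_equiv]

theorem hsym_comp_equiv {κ : Type*} [Fintype κ] [DecidableEq κ] (e : κ ≃ ι) (x : ι → R)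
    (k : ℕ) : hsym (x ∘ e) k = hsym x k :=
  Fintype.sum_equiv (Sym.equivCongr e) _ _ fun μ => by simp [Multiset.map_map]

theorem esym_option_succ (x : Option ι → R) (n : ℕ) :
    esym x (n + 1) = esym (x ∘ some) (n + 1) + x none * esym (x ∘ some) n := by
  have huniv : (univ : Finset (Option ι)).val = none ::ₘ univ.val.map some := rfl
  rw [esym_eq_esymm, esym_eq_esymm, esym_eq_esymm, huniv, Multiset.map_cons,
    Multiset.esymm_cons_succ, Multiset.map_map]

theorem hsym_option_succ (x : Option ι → R) (n : ℕ) :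
    hsym x (n + 1) = hsym (x ∘ some) (n + 1) + x none * hsym x n := by
  rw [hsym, ← (symOptionSuccEquiv (α := ι) (n := n)).symm.sum_comp, Fintype.sum_sum_type,
    add_comm, hsym, hsym, mul_sum]
  simp [symOptionSuccEquiv, Multiset.map_map, Sym.coe_cons]

def hsymSeries (x : ι → R) : PowerSeries R := PowerSeries.mk (hsym x)

def esymSeries (x : ι → R) : PowerSeries R := PowerSeries.mk (esym x)

theorem hsymSeries_comp_equiv {κ : Type*} [Fintype κ] [DecidableEq κ] (e : κ ≃ ι) (x : ι → R) :
    hsymSeries (x ∘ e) = hsymSeries x :=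
  congrArg PowerSeries.mk (funext (hsym_comp_equiv e x))

theorem esymSeries_comp_equiv {κ : Type*} [Fintype κ] [DecidableEq κ] (e : κ ≃ ι) (x : ι → R) :
    esymSeries (x ∘ e) = esymSeries x :=
  congrArg PowerSeries.mk (funext (esym_comp_equiv e x))

theorem hsymSeries_of_isEmpty [IsEmpty ι] (x : ι → R) : hsymSeries x = 1 := by
  ext (_ | k) <;> simp [hsymSeries, hsym_succ_of_isEmpty]

theorem esymSeries_of_isEmpty [IsEmpty ι] (x : ι → R) : esymSeries x = 1 := by
  ext (_ | k) <;> simp [esymSeries, esym_eq_zero_of_card_lt]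

theorem esymSeries_option (x : Option ι → R) :
    esymSeries x = (1 + C (x none) * X) * esymSeries (x ∘ some) := by
  ext (_ | n) <;> simp [esymSeries, add_mul, mul_assoc, esym_option_succ]

theorem hsymSeries_option (x : Option ι → R) :
    (1 - C (x none) * X) * hsymSeries x = hsymSeries (x ∘ some) := by
  ext (_ | n) <;> simp [hsymSeries, sub_mul, mul_assoc, hsym_option_succ]

theorem rescale_neg_one_hsymSeries_mul_esymSeries_fin :
    ∀ {n : ℕ} (x : Fin n → R), rescale (-1) (hsymSeries x) * esymSeries x = 1
  | 0, x => by simp [hsymSeries_of_isEmpty, esymSeries_of_isEmpty]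
  | n + 1, x => by
    let e := (finSuccEquiv n).symm
    let x' := x ∘ e
    have hfactor : rescale (-1) (1 - C (x' none) * X) = 1 + C (x' none) * X := by
      ext (_ | _ | k) <;> simp [coeff_C]
    calc rescale (-1) (hsymSeries x) * esymSeries x
        = rescale (-1) (hsymSeries x') * esymSeries x' := by
          rw [hsymSeries_comp_equiv, esymSeries_comp_equiv]
      _ = rescale (-1) ((1 - C (x' none) * X) * hsymSeries x') * esymSeries (x' ∘ some) := by
          rw [esymSeries_option, map_mul, hfactor, mul_assoc, mul_left_comm]
      _ = 1 := by
          rw [hsymSeries_option, rescale_neg_one_hsymSeries_mul_esymSeries_fin]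

theorem rescale_neg_one_hsymSeries_mul_esymSeries (x : ι → R) :
    rescale (-1) (hsymSeries x) * esymSeries x = 1 := by
  let e := (Fintype.equivFin ι).symm
  rw [← hsymSeries_comp_equiv e, ← esymSeries_comp_equiv e]
  exact rescale_neg_one_hsymSeries_mul_esymSeries_fin _

theorem sum_antidiagonal_hsym_mul_esym (x : ι → R) {n : ℕ} (hn : n ≠ 0) :
    ∑ p ∈ antidiagonal n, (-1) ^ p.1 * hsym x p.1 * esym x p.2 = 0 := by
  simpa [hsymSeries, esymSeries, coeff_mul, hn, mul_assoc] using
    congrArg (coeff n) (rescale_neg_one_hsymSeries_mul_esymSeries x)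

theorem hookS_zero_right (x : ι → R) (n : ℕ) : hookS x n 0 = hsym x (n + 1) := by
  simp [hookS]

theorem hookS_succ_add (x : ι → R) (n q : ℕ) :
    hookS x n (q + 1) + hookS x (n + 1) q = hsym x (n + 1) * esym x (q + 1) := by
  rw [hookS, Nat.sum_antidiagonal_succ, hookS, add_assoc, ← sum_add_distrib, sum_eq_zero, add_zero]
  · simp
  · intro p _
    rw [show n + (p.1 + 1) + 1 = n + 1 + p.1 + 1 by ring]
    ring

theorem hookS_zero_left (x : ι → R) (q : ℕ) : hookS x 0 q = esym x (q + 1) := by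
  have h := sum_antidiagonal_hsym_mul_esym x q.succ_ne_zero
  rw [Nat.sum_antidiagonal_succ] at h
  simp only [pow_zero, hsym_zero, mul_one, one_mul, pow_succ, mul_neg, neg_mul,
    sum_neg_distrib] at h
  simp only [hookS, zero_add]
  linear_combination -h

theorem hookS_eq_zero_of_card_le (x : ι → R) {q : ℕ} (hq : Fintype.card ι ≤ q) (n : ℕ) :
    hookS x n q = 0 := by
  induction n generalizing q with
  | zero => rw [hookS_zero_left, esym_eq_zero_of_card_lt x (by omega)]
  | succ n ih =>
    rw [eq_sub_of_add_eq' (hookS_succ_add x n q), ih (by omega),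
      esym_eq_zero_of_card_lt x (by omega), mul_zero, sub_zero]

theorem sum_antidiagonal_esym_mul_pow_eq_zero (x : ι → R) (i : ι) :
    ∑ p ∈ antidiagonal (Fintype.card ι), (-1) ^ p.1 * esym x p.1 * x i ^ p.2 = 0 := by
  have hroot :
      ((univ.val.map x).map fun t => Polynomial.X - Polynomial.C t).prod.eval (x i) = 0 := by
    rw [Polynomial.eval_multiset_prod, Multiset.map_map, Multiset.map_map]
    exact Multiset.prod_eq_zero (Multiset.mem_map.mpr ⟨i, mem_univ_val i, by simp⟩)
  rw [Multiset.prod_X_sub_X_eq_sum_esymm] at hroot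
  rw [Nat.sum_antidiagonal_eq_sum_range_succ (fun q r => (-1 : R) ^ q * esym x q * x i ^ r)]
  simpa [Polynomial.eval_finsetSum, esym_eq_esymm, mul_assoc] using hroot

theorem pow_card_eq_sum_esym (x : ι → R) {b : ℕ} (hb : Fintype.card ι = b + 1) (i : ι) :
    x i ^ (b + 1) = ∑ p ∈ antidiagonal b, (-1) ^ p.1 * esym x (p.1 + 1) * x i ^ p.2 := by
  have h := sum_antidiagonal_esym_mul_pow_eq_zero x i
  rw [hb, Nat.sum_antidiagonal_succ] at h
  simp only [pow_zero, esym_zero, one_mul, pow_succ, mul_neg, mul_one, neg_mul,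
    sum_neg_distrib] at h
  linear_combination h

theorem sum_hookS_mul_of_pow_eq (x : ι → R) {b : ℕ} (hb : Fintype.card ι = b + 1) {y : R}
    (hy : y ^ (b + 1) = ∑ p ∈ antidiagonal b, (-1) ^ p.1 * esym x (p.1 + 1) * y ^ p.2) (n : ℕ) :
    (∑ p ∈ antidiagonal b, (-1) ^ p.1 * hookS x n p.1 * y ^ p.2) * y
      = ∑ p ∈ antidiagonal b, (-1) ^ p.1 * hookS x (n + 1) p.1 * y ^ p.2 := by
  calc (∑ p ∈ antidiagonal b, (-1) ^ p.1 * hookS x n p.1 * y ^ p.2) * y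
      = ∑ p ∈ antidiagonal (b + 1), (-1) ^ p.1 * hookS x n p.1 * y ^ p.2 := by
        rw [Nat.sum_antidiagonal_succ', hookS_eq_zero_of_card_le x hb.le, sum_mul]
        simp [pow_succ, mul_assoc]
    _ = hsym x (n + 1) * y ^ (b + 1)
          - ∑ p ∈ antidiagonal b, (-1) ^ p.1 * hookS x n (p.1 + 1) * y ^ p.2 := by
        rw [Nat.sum_antidiagonal_succ]
        simp [hookS_zero_right, pow_succ, sub_eq_add_neg]
    _ = ∑ p ∈ antidiagonal b, (-1) ^ p.1 * hookS x (n + 1) p.1 * y ^ p.2 := by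
        rw [hy, mul_sum, ← sum_sub_distrib]
        refine sum_congr rfl fun p _ => ?_
        rw [eq_sub_of_add_eq' (hookS_succ_add x n p.1)]
        ring

theorem pow_card_add_eq_sum_hookS (x : ι → R) {b : ℕ} (hb : Fintype.card ι = b + 1) (i : ι)
    (n : ℕ) :
    x i ^ (b + 1 + n) = ∑ p ∈ antidiagonal b, (-1) ^ p.1 * hookS x n p.1 * x i ^ p.2 := by
  induction n with
  | zero => simp only [add_zero, hookS_zero_left, pow_card_eq_sum_esym x hb i]
  | succ n ih =>
    rw [← add_assoc, pow_succ, ih, sum_hookS_mul_of_pow_eq x hb (pow_card_eq_sum_esym x hb i)]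

end

theorem sum_antidiagonal_eq_sum_Icc {M : Type*} [AddCommMonoid M] (f : ℕ → ℕ → M) (b : ℕ) :
    ∑ p ∈ antidiagonal b, f p.1 p.2 = ∑ j ∈ Icc 1 (b + 1), f (b + 1 - j) (j - 1) := by
  rw [Nat.sum_antidiagonal_eq_sum_range_succ f b]
  refine sum_nbij' (fun k => b + 1 - k) (fun j => b + 1 - j) ?_ ?_ ?_ ?_ ?_
  all_goals intro k hk; simp only [Nat.succ_eq_add_one, mem_range, mem_Icc] at hk ⊢
  iterate 4 omega
  congr 1 <;> omega

theorem monomial_reduction (a : ℕ) (ha : 1 ≤ a) (x : Fin a → R) (m : ℕ) (hm : a ≤ m)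
    (i : Fin a) :
    x i ^ m =
      ∑ j ∈ Finset.Icc 1 a, (-1 : R) ^ (a - j) * hookS x (m - a) (a - j) * x i ^ (j - 1) := by
  obtain ⟨b, rfl⟩ : ∃ b, a = b + 1 := ⟨a - 1, by omega⟩
  obtain ⟨n, rfl⟩ := Nat.exists_eq_add_of_le hm
  rw [pow_card_add_eq_sum_hookS x (Fintype.card_fin _) i n, Nat.add_sub_cancel_left,
    sum_antidiagonal_eq_sum_Icc (fun q r => (-1 : R) ^ q * hookS x n q * x i ^ r)]
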